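/- Let $0 < c_1 < c_2 < \infty$ and $1 < \alpha_1 < \alpha_2 < \infty$. Then there exists a constant $\beta < 1$ (one may take $\beta = (1 + c_1/c_2)^{\alpha_1 - \alpha_2}$) such that for all $a, b, c, d \in (c_1, c_2)$ one has $\frac{(a+b)^{\alpha_1}}{(c+d)^{\alpha_2}} \le \beta \max\left\{ \frac{a^{\alpha_1}}{c^{\alpha_2}}, \frac{b^{\alpha_1}}{d^{\alpha_2}} \right\}$. -/
import Mathlib


/-- Elementary lemma (Lemma 4.2): for `0 < c₁ < c₂` and `1 < α₁ < α₂` there is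
`β < 1` (namely `β = (1 + c₁/c₂)^(α₁ - α₂)`) such that for all
`a, b, c, d ∈ (c₁, c₂)` one has `(a+b)^α₁ / (c+d)^α₂ ≤ β * max (a^α₁/c^α₂) (b^α₁/d^α₂)`. -/
theorem elementary_lemma (c₁ c₂ α₁ α₂ : ℝ) (hc₁ : 0 < c₁) (hc : c₁ < c₂)
    (hα₁ : 1 < α₁) (hα : α₁ < α₂) :
    ∃ β : ℝ, β = (1 + c₁ / c₂) ^ (α₁ - α₂) ∧ β < 1 ∧
      ∀ a b c d : ℝ, a ∈ Set.Ioo c₁ c₂ → b ∈ Set.Ioo c₁ c₂ →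
        c ∈ Set.Ioo c₁ c₂ → d ∈ Set.Ioo c₁ c₂ →
        (a + b) ^ α₁ / (c + d) ^ α₂ ≤ β * max (a ^ α₁ / c ^ α₂) (b ^ α₁ / d ^ α₂) := by
  have hc₂ : (0:ℝ) < c₂ := hc₁.trans hc
  have hq : (0:ℝ) < c₁ / c₂ := div_pos hc₁ hc₂
  have hβpos : (0:ℝ) < (1 + c₁ / c₂) ^ (α₁ - α₂) :=
    Real.rpow_pos_of_pos (by linarith) _
  refine ⟨(1 + c₁ / c₂) ^ (α₁ - α₂), rfl,
    Real.rpow_lt_one_of_one_lt_of_neg (by linarith) (by linarith), ?_⟩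
  intro a b c d ha hb hcc hd
  obtain ⟨ha1, ha2⟩ := ha
  obtain ⟨hb1, hb2⟩ := hb
  obtain ⟨hc1, hc2⟩ := hcc
  obtain ⟨hd1, hd2⟩ := hd
  have hap : 0 < a := hc₁.trans ha1
  have hbp : 0 < b := hc₁.trans hb1
  have hcp : 0 < c := hc₁.trans hc1
  have hdp : 0 < d := hc₁.trans hd1
  set β := (1 + c₁ / c₂) ^ (α₁ - α₂) with hβ
  set M := max (a / c) (b / d) with hM
  have hMpos : 0 < M := lt_of_lt_of_le (div_pos hap hcp) (le_max_left _ _)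
  have hSpos : 0 < c + d := by linarith
  have hTpos : 0 < a + b := by linarith
  -- mediant inequality : a + b ≤ M * (c + d)
  have hmed : a + b ≤ M * (c + d) := by
    have h1 : a ≤ M * c := by
      have := le_max_left (a / c) (b / d)
      rw [hM]; calc a = a / c * c := by field_simp
        _ ≤ M * c := by apply mul_le_mul_of_nonneg_right this hcp.le
    have h2 : b ≤ M * d := by
      have := le_max_right (a / c) (b / d)
      rw [hM]; calc b = b / d * d := by field_simp
        _ ≤ M * d := by apply mul_le_mul_of_nonneg_right this hdp.le
    calc a + b ≤ M * c + M * d := by linarith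
      _ = M * (c + d) := by ring
  -- step 1: (a+b)^α₁ ≤ M^α₁ * (c+d)^α₁
  have step1 : (a + b) ^ α₁ ≤ M ^ α₁ * (c + d) ^ α₁ := by
    calc (a + b) ^ α₁ ≤ (M * (c + d)) ^ α₁ :=
          Real.rpow_le_rpow hTpos.le hmed (by linarith)
      _ = M ^ α₁ * (c + d) ^ α₁ := Real.mul_rpow hMpos.le hSpos.le
  -- step 2: (c+d)^(α₁-α₂) ≤ β * (max c d)^(α₁-α₂)
  have hmcd : 0 < max c d := lt_max_of_lt_left hcp
  have hlow : max c d * (1 + c₁ / c₂) ≤ c + d := by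
    rcases max_cases c d with ⟨h, _⟩ | ⟨h, _⟩ <;> rw [h]
    · have : c * (c₁ / c₂) ≤ c₁ := by
        rw [div_eq_mul_inv]
        calc c * (c₁ * c₂⁻¹) ≤ c₂ * (c₁ * c₂⁻¹) := by
              apply mul_le_mul_of_nonneg_right hc2.le (by positivity)
          _ = c₁ := by field_simp
      nlinarith
    · have : d * (c₁ / c₂) ≤ c₁ := by
        rw [div_eq_mul_inv]
        calc d * (c₁ * c₂⁻¹) ≤ c₂ * (c₁ * c₂⁻¹) := by
              apply mul_le_mul_of_nonneg_right hd2.le (by positivity)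
          _ = c₁ := by field_simp
      nlinarith
  have step2 : (c + d) ^ (α₁ - α₂) ≤ (max c d) ^ (α₁ - α₂) * β := by
    calc (c + d) ^ (α₁ - α₂) ≤ (max c d * (1 + c₁ / c₂)) ^ (α₁ - α₂) :=
          Real.rpow_le_rpow_of_nonpos (by positivity) hlow (by linarith)
      _ = (max c d) ^ (α₁ - α₂) * β := Real.mul_rpow hmcd.le (by linarith)
  -- combine
  have key : (a + b) ^ α₁ / (c + d) ^ α₂ ≤ β * (M ^ α₁ * (max c d) ^ (α₁ - α₂)) := by
    have hrw : (a + b) ^ α₁ / (c + d) ^ α₂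
        = (a + b) ^ α₁ / (c + d) ^ α₁ * (c + d) ^ (α₁ - α₂) := by
      rw [Real.rpow_sub hSpos]
      field_simp
    rw [hrw]
    have h1 : (a + b) ^ α₁ / (c + d) ^ α₁ ≤ M ^ α₁ := by
      rw [div_le_iff₀ (Real.rpow_pos_of_pos hSpos _)]
      exact step1
    calc (a + b) ^ α₁ / (c + d) ^ α₁ * (c + d) ^ (α₁ - α₂)
        ≤ M ^ α₁ * ((max c d) ^ (α₁ - α₂) * β) := by
          apply mul_le_mul h1 step2 (by positivity) (by positivity)
      _ = β * (M ^ α₁ * (max c d) ^ (α₁ - α₂)) := by ring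
  refine key.trans ?_
  apply mul_le_mul_of_nonneg_left _ hβpos.le
  -- M^α₁ * (max c d)^(α₁-α₂) ≤ max (a^α₁/c^α₂) (b^α₁/d^α₂)
  rcases max_cases (a / c) (b / d) with ⟨hMe, _⟩ | ⟨hMe, _⟩
  · have h1 : (max c d) ^ (α₁ - α₂) ≤ c ^ (α₁ - α₂) :=
      Real.rpow_le_rpow_of_nonpos hcp (le_max_left _ _) (by linarith)
    calc M ^ α₁ * (max c d) ^ (α₁ - α₂) ≤ M ^ α₁ * c ^ (α₁ - α₂) := by
          apply mul_le_mul_of_nonneg_left h1 (by positivity)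
      _ = a ^ α₁ / c ^ α₂ := by
          rw [hM, hMe, Real.div_rpow hap.le hcp.le, Real.rpow_sub hcp]
          rw [div_mul_div_comm, div_eq_div_iff (by positivity) (by positivity)]
          rw [mul_assoc, ← Real.rpow_add hcp]
      _ ≤ max (a ^ α₁ / c ^ α₂) (b ^ α₁ / d ^ α₂) := le_max_left _ _
  · have h1 : (max c d) ^ (α₁ - α₂) ≤ d ^ (α₁ - α₂) :=
      Real.rpow_le_rpow_of_nonpos hdp (le_max_right _ _) (by linarith)
    calc M ^ α₁ * (max c d) ^ (α₁ - α₂) ≤ M ^ α₁ * d ^ (α₁ - α₂) := by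
          apply mul_le_mul_of_nonneg_left h1 (by positivity)
      _ = b ^ α₁ / d ^ α₂ := by
          rw [hM, hMe, Real.div_rpow hbp.le hdp.le, Real.rpow_sub hdp]
          rw [div_mul_div_comm, div_eq_div_iff (by positivity) (by positivity)]
          rw [mul_assoc, ← Real.rpow_add hdp]
      _ ≤ max (a ^ α₁ / c ^ α₂) (b ^ α₁ / d ^ α₂) := le_max_right _ _
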